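/- If m, n ≥ 3, then the square (0,0) is not the initial square of any hamiltonian path in the m×n projective checkerboard B(m,n); consequently the diagonal D_{m+n−2} = {(m−1,n−1)} is not the terminal diagonal of any hamiltonian path, and B(m,n) has no hamiltonian cycle. -/

import Mathlib

/-!
The square `(m-1, n-1)` moves only to `(0, 0)`, so a hamiltonian path from `(0, 0)` ends there.
Each square has exactly two entering moves, so if `s` travels north then the other square
entering `sN` must travel north as well; iterating along the direction-forcing diagonals shows
that the path contains the edge `ρv → ρu` whenever it contains `u → v`, where `ρ` is the
half-turn of the board (for east edges, transpose the board). Starting at `(0, 0)` the path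
climbs one subdiagonal per step until it first wraps around, `u → ρu`, after at most
`m + n - 3` steps; from then on it retraces its beginning under `ρ` and reaches
`ρ(0, 0) = (m-1, n-1)` after at most `2(m + n) - 5` steps, before visiting all `mn` squares
when `m, n ≥ 3`. Reversing a path under `ρ`, or rotating a cycle, reduces the other two claims
to this one.
-/

namespace ProjBoard

/-- `(p,q)` is a square of the `m × n` board. -/
def Sq (m n : ℕ) (s : ℕ × ℕ) : Prop := s.1 < m ∧ s.2 < n

/-- The east move on the `m × n` projective checkerboard. -/
def moveE (m n : ℕ) (s : ℕ × ℕ) : ℕ × ℕ :=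
  if s.1 < m - 1 then (s.1 + 1, s.2) else (0, n - 1 - s.2)

/-- The north move on the `m × n` projective checkerboard. -/
def moveN (m n : ℕ) (s : ℕ × ℕ) : ℕ × ℕ :=
  if s.2 < n - 1 then (s.1, s.2 + 1) else (m - 1 - s.1, 0)

/-- Directed edge of the board: from a square `s` to `sE` or `sN`. -/
def Edge (m n : ℕ) (s t : ℕ × ℕ) : Prop :=
  Sq m n s ∧ (t = moveE m n s ∨ t = moveN m n s)

/-- A hamiltonian path, recorded as the list of squares it visits in order. -/
def IsHamPath (m n : ℕ) (l : List (ℕ × ℕ)) : Prop :=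
  l.Chain' (Edge m n) ∧ l.Nodup ∧ ∀ s, Sq m n s ↔ s ∈ l

/-- A hamiltonian path with initial square `ι` and terminal square `τ`. -/
def HamPathFromTo (m n : ℕ) (ι τ : ℕ × ℕ) (l : List (ℕ × ℕ)) : Prop :=
  IsHamPath m n l ∧ l.head? = some ι ∧ l.getLast? = some τ

/-- The square `s` travels east in the hamiltonian path `l`:
the edge from `s` to `sE` belongs to `l`. -/
def TravelsEast (m n : ℕ) (l : List (ℕ × ℕ)) (s : ℕ × ℕ) : Prop :=
  ∃ i : ℕ, l[i]? = some s ∧ l[i + 1]? = some (moveE m n s)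

/-- The square `s` travels north in the hamiltonian path `l`:
the edge from `s` to `sN` belongs to `l`. -/
def TravelsNorth (m n : ℕ) (l : List (ℕ × ℕ)) (s : ℕ × ℕ) : Prop :=
  ∃ i : ℕ, l[i]? = some s ∧ l[i + 1]? = some (moveN m n s)

/-- Two squares lie in the same (direction-forcing) diagonal. -/
def SameDiag (m n : ℕ) (s t : ℕ × ℕ) : Prop :=
  s.1 + s.2 = t.1 + t.2 ∨ s.1 + s.2 + (t.1 + t.2) = m + n - 3

/-- The southeasternmost square of the subdiagonal `S_b`. -/
def tauPlus (m n b : ℕ) : ℕ × ℕ :=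
  if b ≤ m - 1 then (b, 0) else (m - 1, b - (m - 1))

/-- A hamiltonian cycle, recorded as the list of squares it visits in order
(with an edge from the last square back to the first). -/
def IsHamCycle (m n : ℕ) (l : List (ℕ × ℕ)) : Prop :=
  IsHamPath m n l ∧ ∃ s t, l.head? = some s ∧ l.getLast? = some t ∧ Edge m n t s

section Consecutive

variable {α β : Type*} {l : List α} {a b c : α}

def Consecutive (l : List α) (a b : α) : Prop :=
  ∃ i : ℕ, l[i]? = some a ∧ l[i + 1]? = some b

theorem index_eq_of_nodup (hl : l.Nodup) {i j : ℕ} (hi : l[i]? = some a)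
    (hj : l[j]? = some a) : i = j :=
  (List.getElem?_inj (List.getElem?_eq_some_iff.1 hi).1 hl).1 (hi.trans hj.symm)

theorem Consecutive.rel {R : α → α → Prop} (hl : l.IsChain R) (h : Consecutive l a b) :
    R a b := by
  obtain ⟨i, hi, hi1⟩ := h
  obtain ⟨hlt, rfl⟩ := List.getElem?_eq_some_iff.1 hi1
  obtain ⟨_, rfl⟩ := List.getElem?_eq_some_iff.1 hi
  exact List.isChain_iff_getElem.1 hl i hlt

theorem Consecutive.getElem?_succ (hl : l.Nodup) (h : Consecutive l a b) {i : ℕ}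
    (hi : l[i]? = some a) : l[i + 1]? = some b := by
  obtain ⟨j, hj, hj1⟩ := h
  rwa [index_eq_of_nodup hl hi hj]

theorem Consecutive.left_unique (hl : l.Nodup) (h : Consecutive l a c)
    (h' : Consecutive l b c) : a = b := by
  obtain ⟨i, hi, hi1⟩ := h
  obtain ⟨j, hj, hj1⟩ := h'
  obtain rfl : i = j := by simpa using index_eq_of_nodup hl hi1 hj1
  exact Option.some.inj (hi.symm.trans hj)

theorem not_consecutive_of_getElem?_zero (hl : l.Nodup) (h0 : l[0]? = some b) :
    ¬ Consecutive l a b :=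
  fun ⟨_, _, hi1⟩ => Nat.succ_ne_zero _ (index_eq_of_nodup hl hi1 h0)

theorem Consecutive.map (f : α → β) (h : Consecutive l a b) :
    Consecutive (l.map f) (f a) (f b) := by
  obtain ⟨i, hi, hi1⟩ := h
  exact ⟨i, by simp [hi], by simp [hi1]⟩

theorem getElem?_add_eq_map_getElem?_sub {f : α → α} (hl : l.Nodup)
    (hf : ∀ a b, Consecutive l a b → Consecutive l (f b) (f a)) {k : ℕ} {u : α}
    (hu : l[k]? = some u) (hk : l[k + 1]? = some (f u)) :
    ∀ t ≤ k, l[k + 1 + t]? = (l[k - t]?).map f := by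
  have hklt : k < l.length := (List.getElem?_eq_some_iff.1 hu).1
  intro t
  induction t with
  | zero => simp [hu, hk]
  | succ t ih =>
    intro ht
    have hv : l[k - t]? = some l[k - t] := List.getElem?_eq_getElem (by omega)
    have hv' : l[k - (t + 1)]? = some l[k - (t + 1)] := List.getElem?_eq_getElem (by omega)
    have hcons : Consecutive l l[k - (t + 1)] l[k - t] :=
      ⟨k - (t + 1), hv', by rwa [show k - (t + 1) + 1 = k - t by omega]⟩
    have hprev := ih (by omega)
    rw [hv, Option.map_some] at hprev
    rw [hv', Option.map_some, ← add_assoc]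
    exact (hf _ _ hcons).getElem?_succ hl hprev

end Consecutive

section Board

variable {m n : ℕ}

def halfTurn (m n : ℕ) (s : ℕ × ℕ) : ℕ × ℕ := (m - 1 - s.1, n - 1 - s.2)

def predE (m n : ℕ) (v : ℕ × ℕ) : ℕ × ℕ :=
  if 1 ≤ v.1 then (v.1 - 1, v.2) else (m - 1, n - 1 - v.2)

def forcedN (m n : ℕ) (s : ℕ × ℕ) : ℕ × ℕ := predE m n (moveN m n s)

theorem moveN_of_lt {p q : ℕ} (hq : q + 1 < n) : moveN m n (p, q) = (p, q + 1) :=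
  if_pos (by dsimp only; omega)

theorem moveN_top (p : ℕ) : moveN m n (p, n - 1) = (m - 1 - p, 0) := if_neg (by simp)

theorem predE_of_pos {p q : ℕ} (hp : 0 < p) : predE m n (p, q) = (p - 1, q) := if_pos hp

theorem predE_zero (q : ℕ) : predE m n (0, q) = (m - 1, n - 1 - q) := if_neg (by simp)

theorem halfTurn_origin : halfTurn m n (0, 0) = (m - 1, n - 1) := rfl

theorem moveE_corner : moveE m n (m - 1, n - 1) = (0, 0) := by simp [moveE]

theorem moveN_corner : moveN m n (m - 1, n - 1) = (0, 0) := by simp [moveN]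

theorem eq_origin_of_edge_corner {t : ℕ × ℕ} (h : Edge m n (m - 1, n - 1) t) : t = (0, 0) :=
  h.2.elim (·.trans moveE_corner) (·.trans moveN_corner)

theorem Sq.moveE {s : ℕ × ℕ} (h : Sq m n s) : Sq m n (moveE m n s) := by
  obtain ⟨h1, h2⟩ := h
  simp only [ProjBoard.moveE]; split_ifs <;> constructor <;> dsimp only <;> omega

theorem Sq.moveN {s : ℕ × ℕ} (h : Sq m n s) : Sq m n (moveN m n s) := by
  obtain ⟨h1, h2⟩ := h
  simp only [ProjBoard.moveN]; split_ifs <;> constructor <;> dsimp only <;> omega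

theorem Sq.halfTurn {s : ℕ × ℕ} (h : Sq m n s) : Sq m n (halfTurn m n s) := by
  obtain ⟨h1, h2⟩ := h
  constructor <;> dsimp only [ProjBoard.halfTurn] <;> omega

theorem Sq.predE {v : ℕ × ℕ} (h : Sq m n v) : Sq m n (predE m n v) := by
  obtain ⟨h1, h2⟩ := h
  simp only [ProjBoard.predE]; split_ifs <;> constructor <;> dsimp only <;> omega

theorem Edge.sq_right {s t : ℕ × ℕ} (h : Edge m n s t) : Sq m n t := by
  rcases h with ⟨hs, rfl | rfl⟩
  exacts [hs.moveE, hs.moveN]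

theorem moveE_ne_moveN (hm : 2 ≤ m) (hn : 2 ≤ n) {s : ℕ × ℕ} (hs : Sq m n s)
    (hsc : s ≠ (m - 1, n - 1)) : moveE m n s ≠ moveN m n s := by
  obtain ⟨p, q⟩ := s
  obtain ⟨h1, h2⟩ : p < m ∧ q < n := hs
  simp only [ne_eq, Prod.mk.injEq, not_and] at hsc
  simp only [moveE, moveN]
  split_ifs <;> simp only [ne_eq, Prod.mk.injEq] <;> omega

theorem halfTurn_halfTurn {s : ℕ × ℕ} (h : Sq m n s) : halfTurn m n (halfTurn m n s) = s := by
  obtain ⟨p, q⟩ := s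
  obtain ⟨h1, h2⟩ : p < m ∧ q < n := h
  simp only [halfTurn, Prod.mk.injEq]
  omega

theorem moveE_predE {v : ℕ × ℕ} (h : Sq m n v) : moveE m n (predE m n v) = v := by
  obtain ⟨p, q⟩ := v
  obtain ⟨h1, h2⟩ : p < m ∧ q < n := h
  simp only [moveE, predE]
  split_ifs <;> simp only [Prod.mk.injEq, and_true] <;> omega

theorem moveE_halfTurn_moveE {s : ℕ × ℕ} (h : Sq m n s) :
    moveE m n (halfTurn m n (moveE m n s)) = halfTurn m n s := by
  obtain ⟨p, q⟩ := s
  obtain ⟨h1, h2⟩ : p < m ∧ q < n := h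
  simp only [moveE, halfTurn]
  split_ifs <;> simp only [Prod.mk.injEq, and_true] <;> omega

theorem moveN_halfTurn_moveN {s : ℕ × ℕ} (h : Sq m n s) :
    moveN m n (halfTurn m n (moveN m n s)) = halfTurn m n s := by
  obtain ⟨p, q⟩ := s
  obtain ⟨h1, h2⟩ : p < m ∧ q < n := h
  simp only [moveN, halfTurn]
  split_ifs <;> simp only [Prod.mk.injEq, true_and] <;> omega

theorem Edge.halfTurn_reverse {s t : ℕ × ℕ} (h : Edge m n s t) :
    Edge m n (halfTurn m n t) (halfTurn m n s) := by
  refine ⟨h.sq_right.halfTurn, ?_⟩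
  rcases h with ⟨hs, rfl | rfl⟩
  exacts [.inl (moveE_halfTurn_moveE hs).symm, .inr (moveN_halfTurn_moveN hs).symm]

theorem Edge.diag_succ_or_eq_halfTurn {s t : ℕ × ℕ} (h : Edge m n s t) :
    t.1 + t.2 = s.1 + s.2 + 1 ∨ t = halfTurn m n s := by
  obtain ⟨p, q⟩ := s
  obtain ⟨hs, rfl | rfl⟩ := h <;>
  · obtain ⟨h1, h2⟩ : p < m ∧ q < n := hs
    simp only [ProjBoard.moveE, ProjBoard.moveN, halfTurn]
    split_ifs <;> simp only [Prod.mk.injEq, and_true, true_and] <;> omega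

theorem moveE_swap (s : ℕ × ℕ) : (moveE m n s).swap = moveN n m s.swap := by
  obtain ⟨p, q⟩ := s
  simp only [moveE, moveN, Prod.swap_prod_mk]; split_ifs <;> rfl

theorem moveN_swap (s : ℕ × ℕ) : (moveN m n s).swap = moveE n m s.swap := by
  obtain ⟨p, q⟩ := s
  simp only [moveE, moveN, Prod.swap_prod_mk]; split_ifs <;> rfl

theorem halfTurn_swap (s : ℕ × ℕ) : (halfTurn m n s).swap = halfTurn n m s.swap := rfl

theorem Edge.swap {s t : ℕ × ℕ} (h : Edge m n s t) : Edge n m s.swap t.swap := by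
  rcases h with ⟨⟨h1, h2⟩, rfl | rfl⟩
  exacts [⟨⟨h2, h1⟩, .inr (moveE_swap s)⟩, ⟨⟨h2, h1⟩, .inl (moveN_swap s)⟩]

theorem iterate_forcedN_diag {p q i : ℕ} (hip : i ≤ p) (hq : q + i < n) :
    (forcedN m n)^[i] (p, q) = (p - i, q + i) := by
  induction i with
  | zero => rfl
  | succ i ih =>
    rw [Function.iterate_succ_apply', ih (by omega) (by omega), forcedN,
      moveN_of_lt (by omega), predE_of_pos (by omega)]
    simp only [Prod.mk.injEq]
    omega

theorem forcedN_left {q : ℕ} (hq : q + 1 < n) : forcedN m n (0, q) = (m - 1, n - 2 - q) := by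
  rw [forcedN, moveN_of_lt hq, predE_zero]

  simp only [Prod.mk.injEq, true_and]
  omega

theorem forcedN_top {p : ℕ} (hp : p + 1 < m) : forcedN m n (p, n - 1) = (m - 2 - p, 0) := by
  rw [forcedN, moveN_top, predE_of_pos (by omega)]
  simp only [Prod.mk.injEq, and_true]
  omega

/-- `s` and `halfTurn (sN)` lie in the same direction-forcing diagonal, which `forcedN`
runs through. -/
theorem exists_iterate_forcedN_eq {s : ℕ × ℕ} (hs : Sq m n s) :
    ∃ k, (forcedN m n)^[k] s = halfTurn m n (moveN m n s) := by
  obtain ⟨p, q⟩ := s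
  obtain ⟨h1, h2⟩ : p < m ∧ q < n := hs
  by_cases htop : q + 1 < n
  swap
  · obtain rfl : q = n - 1 := by omega
    refine ⟨0, ?_⟩
    rw [moveN_top]
    simp only [Function.iterate_zero, id, halfTurn, Prod.mk.injEq]
    omega
  rw [moveN_of_lt htop]
  by_cases hc : p + q + 2 ≤ n
  · refine ⟨p + (1 + p), ?_⟩
    rw [Function.iterate_add_apply, Function.iterate_add_apply,
      iterate_forcedN_diag (p := p) (q := q) le_rfl (by omega), Nat.sub_self,
      Function.iterate_one, forcedN_left (by omega),
      iterate_forcedN_diag (p := m - 1) (by omega) (by omega)]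
    simp only [halfTurn, Prod.mk.injEq, true_and]
    omega
  · refine ⟨(n - 2 - q) + (1 + (n - 1 - q)), ?_⟩
    rw [Function.iterate_add_apply, Function.iterate_add_apply,
      iterate_forcedN_diag (p := p) (q := q) (by omega) (by omega), Function.iterate_one,
      show q + (n - 1 - q) = n - 1 by omega, forcedN_top (by omega),
      iterate_forcedN_diag (q := 0) (by omega) (by omega)]
    simp only [halfTurn, Prod.mk.injEq]
    omega

end Board

section HamPath

variable {m n : ℕ} {l : List (ℕ × ℕ)}

theorem IsHamPath.length_eq (hl : IsHamPath m n l) : l.length = m * n := by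
  have h : l.toFinset = Finset.range m ×ˢ Finset.range n := by
    ext s
    simp only [List.mem_toFinset, Finset.mem_product, Finset.mem_range, ← hl.2.2, Sq]
  rw [← List.toFinset_card_of_nodup hl.2.1, h, Finset.card_product, Finset.card_range,
    Finset.card_range]

theorem IsHamPath.map_swap (hl : IsHamPath m n l) : IsHamPath n m (l.map Prod.swap) := by
  obtain ⟨hc, hnd, hcov⟩ := hl
  refine ⟨List.isChain_map _ |>.2 (hc.imp fun _ _ h => h.swap),
    hnd.map Prod.swap_injective, fun s => ?_⟩
  rw [List.mem_map_swap, ← hcov]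
  exact And.comm

theorem IsHamPath.reverse_map_halfTurn (hl : IsHamPath m n l) :
    IsHamPath m n (l.reverse.map (halfTurn m n)) := by
  obtain ⟨hc, hnd, hcov⟩ := hl
  have hsq : ∀ s ∈ l.reverse, Sq m n s := fun s hs => (hcov s).2 (List.mem_reverse.1 hs)
  refine ⟨List.isChain_map _ |>.2 (List.isChain_reverse.2 (hc.imp fun _ _ h =>
    h.halfTurn_reverse)), (List.nodup_reverse.2 hnd).map_on fun x hx y hy e => ?_,
    fun s => ⟨fun hs => ?_, fun hs => ?_⟩⟩
  · rw [← halfTurn_halfTurn (hsq x hx), e, halfTurn_halfTurn (hsq y hy)]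
  · exact List.mem_map.2 ⟨_, List.mem_reverse.2 ((hcov _).1 hs.halfTurn), halfTurn_halfTurn hs⟩
  · obtain ⟨x, hx, rfl⟩ := List.mem_map.1 hs
    exact (hsq x hx).halfTurn

theorem IsHamCycle.exists_isHamPath_head? (hc : IsHamCycle m n l) {s : ℕ × ℕ} (hs : s ∈ l) :
    ∃ l', IsHamPath m n l' ∧ l'.head? = some s := by
  obtain ⟨⟨hch, hnd, hcov⟩, a, b, ha, hb, hba⟩ := hc
  obtain ⟨A, B, rfl⟩ := List.append_of_mem hs
  have hperm : (A ++ s :: B).Perm (s :: B ++ A) := List.perm_append_comm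
  obtain ⟨hchA, hchB, -⟩ := List.isChain_append.1 hch
  refine ⟨s :: B ++ A, ⟨List.isChain_append.2 ⟨hchB, hchA, ?_⟩, hperm.nodup_iff.1 hnd,
    fun t => (hcov t).trans hperm.mem_iff⟩, rfl⟩
  intro x hx y hy
  rw [Option.mem_def] at hx hy
  simp only [List.getLast?_append, hx, Option.some_or, Option.some.injEq] at hb
  simp only [List.head?_append, hy, Option.some_or, Option.some.injEq] at ha
  rwa [ha, hb]

theorem IsHamPath.getElem?_length_sub_one (hl : IsHamPath m n l) (h0 : l[0]? = some (0, 0)) :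
    l[l.length - 1]? = some (m - 1, n - 1) := by
  obtain ⟨hm, hn⟩ : 0 < m ∧ 0 < n := (hl.2.2 _).2 (List.mem_iff_getElem?.2 ⟨0, h0⟩)
  obtain ⟨i, hi⟩ := List.mem_iff_getElem?.1 ((hl.2.2 (m - 1, n - 1)).1 ⟨by omega, by omega⟩)
  have hlt : i < l.length := (List.getElem?_eq_some_iff.1 hi).1
  obtain rfl : i = l.length - 1 := by
    by_contra hne
    have hcons : Consecutive l (m - 1, n - 1) l[i + 1] :=
      ⟨i, hi, List.getElem?_eq_getElem (by omega)⟩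
    rw [eq_origin_of_edge_corner (hcons.rel hl.1)] at hcons
    exact not_consecutive_of_getElem?_zero hl.2.1 h0 hcons
  exact hi

theorem IsHamPath.exists_consecutive (hl : IsHamPath m n l) (h0 : l[0]? = some (0, 0))
    {s : ℕ × ℕ} (hs : Sq m n s) (hsc : s ≠ (m - 1, n - 1)) : ∃ t, Consecutive l s t := by
  obtain ⟨i, hi⟩ := List.mem_iff_getElem?.1 ((hl.2.2 s).1 hs)
  have hlt : i < l.length := (List.getElem?_eq_some_iff.1 hi).1
  have hne : i ≠ l.length - 1 := by
    rintro rfl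
    exact hsc (Option.some.inj (hi.symm.trans (hl.getElem?_length_sub_one h0)))
  exact ⟨l[i + 1], i, hi, List.getElem?_eq_getElem (by omega)⟩

/-- The two squares entering `sN` are `s` and `forcedN s`; once `s` uses the square `sN`,
`forcedN s` cannot travel east, so it travels north. -/
theorem IsHamPath.travelsNorth_forcedN (hm : 2 ≤ m) (hn : 2 ≤ n) (hl : IsHamPath m n l)
    (h0 : l[0]? = some (0, 0)) {s : ℕ × ℕ} (h : TravelsNorth m n l s) :
    TravelsNorth m n l (forcedN m n s) := by
  have hcons : Consecutive l s (moveN m n s) := h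
  have hs : Sq m n s := (hcons.rel hl.1).1
  have hv0 : moveN m n s ≠ (0, 0) := fun e =>
    not_consecutive_of_getElem?_zero hl.2.1 h0 (e ▸ hcons)
  have hsc : s ≠ (m - 1, n - 1) := by rintro rfl; exact hv0 moveN_corner
  have hE : moveE m n (forcedN m n s) = moveN m n s := moveE_predE hs.moveN
  have hwc : forcedN m n s ≠ (m - 1, n - 1) := by
    intro e; rw [e, moveE_corner] at hE; exact hv0 hE.symm
  obtain ⟨t, ht⟩ := hl.exists_consecutive h0 (s := forcedN m n s) hs.moveN.predE hwc
  rcases (ht.rel hl.1).2 with rfl | rfl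
  · rw [hE] at ht
    rw [ht.left_unique hl.2.1 hcons] at hE
    exact absurd hE (moveE_ne_moveN hm hn hs hsc)
  · exact ht

theorem IsHamPath.travelsNorth_iterate_forcedN (hm : 2 ≤ m) (hn : 2 ≤ n)
    (hl : IsHamPath m n l) (h0 : l[0]? = some (0, 0)) {s : ℕ × ℕ} (h : TravelsNorth m n l s)
    (k : ℕ) : TravelsNorth m n l ((forcedN m n)^[k] s) := by
  induction k with
  | zero => exact h
  | succ k ih =>
    rw [Function.iterate_succ_apply']
    exact hl.travelsNorth_forcedN hm hn h0 ih

theorem IsHamPath.consecutive_halfTurn_of_travelsNorth (hm : 2 ≤ m) (hn : 2 ≤ n)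
    (hl : IsHamPath m n l) (h0 : l[0]? = some (0, 0)) {s : ℕ × ℕ} (h : TravelsNorth m n l s) :
    Consecutive l (halfTurn m n (moveN m n s)) (halfTurn m n s) := by
  have hs : Sq m n s := ((show Consecutive l s _ from h).rel hl.1).1
  obtain ⟨k, hk⟩ := exists_iterate_forcedN_eq hs
  have := hl.travelsNorth_iterate_forcedN hm hn h0 h k
  rwa [hk, TravelsNorth, moveN_halfTurn_moveN hs] at this

theorem IsHamPath.consecutive_halfTurn (hm : 2 ≤ m) (hn : 2 ≤ n) (hl : IsHamPath m n l)
    (h0 : l[0]? = some (0, 0)) {u v : ℕ × ℕ} (h : Consecutive l u v) :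
    Consecutive l (halfTurn m n v) (halfTurn m n u) := by
  rcases (h.rel hl.1).2 with rfl | rfl
  · have hT : TravelsNorth n m (l.map Prod.swap) u.swap := by
      have := h.map Prod.swap
      rwa [moveE_swap] at this
    have := (hl.map_swap.consecutive_halfTurn_of_travelsNorth hn hm
      (by simp [h0]) hT).map Prod.swap
    simpa [List.map_map, halfTurn_swap, ← moveE_swap] using this
  · exact hl.consecutive_halfTurn_of_travelsNorth hm hn h0 h

theorem diag_eq_of_no_wrap (hc : l.IsChain (Edge m n)) (h0 : l[0]? = some (0, 0)) {k : ℕ}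
    (hwrap : ∀ a < k, ∀ u, l[a]? = some u → l[a + 1]? ≠ some (halfTurn m n u))
    {s : ℕ × ℕ} (hs : l[k]? = some s) : s.1 + s.2 = k := by
  induction k generalizing s with
  | zero =>
    obtain rfl := Option.some.inj (hs.symm.trans h0)
    rfl
  | succ k ih =>
    have hk : k < l.length := by have := (List.getElem?_eq_some_iff.1 hs).1; omega
    have hu : l[k]? = some l[k] := List.getElem?_eq_getElem hk
    rcases Edge.diag_succ_or_eq_halfTurn (Consecutive.rel hc ⟨k, hu, hs⟩) with h | rfl
    · rw [h, ih (fun a ha => hwrap a (by omega)) hu]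
    · exact absurd hs (hwrap k (by omega) _ hu)

theorem IsHamPath.exists_wrap (hm : 2 ≤ m) (hn : 2 ≤ n) (hl : IsHamPath m n l)
    (h0 : l[0]? = some (0, 0)) :
    ∃ a u, a + 3 ≤ m + n ∧ l[a]? = some u ∧ l[a + 1]? = some (halfTurn m n u) := by
  by_contra! hwrap
  have hmn : m + n ≤ m * n := by nlinarith
  have hk : m + n - 2 < l.length := by rw [hl.length_eq]; omega
  have hs : l[m + n - 2]? = some l[m + n - 2] := List.getElem?_eq_getElem hk
  have hsq : Sq m n l[m + n - 2] := (hl.2.2 _).2 (List.getElem_mem hk)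
  have hdiag := diag_eq_of_no_wrap hl.1 h0 (fun a ha u hu => hwrap a u (by omega) hu) hs
  have hcorner : l[m + n - 2] = (m - 1, n - 1) := by
    obtain ⟨h1, h2⟩ := hsq
    ext <;> omega
  rw [hcorner] at hs
  have := index_eq_of_nodup hl.2.1 hs (hl.getElem?_length_sub_one h0)
  rw [hl.length_eq] at this
  omega

theorem IsHamPath.head?_ne_origin (hm : 3 ≤ m) (hn : 3 ≤ n) (hl : IsHamPath m n l) :
    l.head? ≠ some (0, 0) := by
  intro h
  have h0 : l[0]? = some (0, 0) := List.head?_eq_getElem? ▸ h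
  obtain ⟨a, u, ha, hu, hwrap⟩ := hl.exists_wrap (by omega) (by omega) h0
  have hback := getElem?_add_eq_map_getElem?_sub hl.2.1
    (fun _ _ => hl.consecutive_halfTurn (by omega) (by omega) h0) hu hwrap a le_rfl
  rw [Nat.sub_self, h0, Option.map_some, halfTurn_origin] at hback
  have := index_eq_of_nodup hl.2.1 hback (hl.getElem?_length_sub_one h0)
  rw [hl.length_eq] at this
  have : 2 * (m + n) ≤ m * n + 3 := by nlinarith
  omega

end HamPath

theorem noHamFrom00 (m n : ℕ) (hm : 3 ≤ m) (hn : 3 ≤ n) :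
    (¬ ∃ l, IsHamPath m n l ∧ l.head? = some ((0, 0) : ℕ × ℕ)) ∧
    (¬ ∃ l, IsHamPath m n l ∧ l.getLast? = some ((m - 1, n - 1) : ℕ × ℕ)) ∧
    (¬ ∃ l, IsHamCycle m n l) := by
  have noStart : ¬ ∃ l, IsHamPath m n l ∧ l.head? = some ((0, 0) : ℕ × ℕ) :=
    fun ⟨_, hl, h0⟩ => hl.head?_ne_origin hm hn h0
  refine ⟨noStart, ?_, ?_⟩
  · rintro ⟨l, hl, hlast⟩
    refine noStart ⟨_, hl.reverse_map_halfTurn, ?_⟩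
    simp [List.head?_reverse, hlast, halfTurn]
  · rintro ⟨l, hc⟩
    exact noStart (hc.exists_isHamPath_head? ((hc.1.2.2 _).1 ⟨by omega, by omega⟩))

end ProjBoard
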